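/- Let (a0, a+, a−, φ) be a solution of the Stenzel monopole ODE system on [t*, T] ⊂ (0,∞) with a0(t*) > 0, a+(t*) > 0, a−(t*) > 0, and with either φ(t*) > 0 and φ'(t*) > 0, or φ(t*) < 0 and φ'(t*) < 0. Then a0(t) > 0, a+(t) > 0, a−(t) > 0 for all t ∈ [t*, T], and φ keeps its sign: φ(t) > 0 for all t ∈ [t*, T] in the first case, and φ(t) < 0 for all t ∈ [t*, T] in the second case. -/

import Mathlib

open Set

/-- The hypotheses on the functions `λ, μ, v0, v3` encoding the Stenzel Calabi–Yau
structure on `T*S³`: they are C¹ on `(0,∞)`, satisfy `λ > 0`, `μ > 0`, `v3 − v0 > 0`,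
`v3 + v0 > 0`, `v0 < 0`, `μ² = v3² − v0²`, and the hypo-evolution equations
`μ' = 2λ`, `(μλ)' = 3v3`, `(λv3)' = 3μ`, `(λv0)' = 0`. -/
def StenzelHypo (lam mu v0 v3 : ℝ → ℝ) : Prop :=
  ContDiffOn ℝ 1 lam (Ioi 0) ∧ ContDiffOn ℝ 1 mu (Ioi 0) ∧
  ContDiffOn ℝ 1 v0 (Ioi 0) ∧ ContDiffOn ℝ 1 v3 (Ioi 0) ∧
  (∀ t ∈ Ioi (0 : ℝ), 0 < lam t ∧ 0 < mu t ∧ 0 < v3 t - v0 t ∧ 0 < v3 t + v0 t ∧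
    v0 t < 0 ∧ mu t ^ 2 = v3 t ^ 2 - v0 t ^ 2) ∧
  (∀ t ∈ Ioi (0 : ℝ),
    HasDerivAt mu (2 * lam t) t ∧
    HasDerivAt (fun s => mu s * lam s) (3 * v3 t) t ∧
    HasDerivAt (fun s => lam s * v3 s) (3 * mu t) t ∧
    HasDerivAt (fun s => lam s * v0 s) 0 t)

/-- A solution of the Stenzel monopole ODE system:
`a0' = (4λ/μ)(a₊a₋ − a0)`,
`a₊' = (3(v3 + v0)/(2λμ))(a0a₋ − a₊) − 2a₊φ`,
`a₋' = (3(v3 − v0)/(2λμ))(a0a₊ − a₋) + 2a₋φ`,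
`φ' = (3/μ²)(((a₊² + a₋²)/2 − 1)v0 − ((a₊² − a₋²)/2)v3)`. -/
def IsSolStenzelMonopole (lam mu v0 v3 a0 ap am phi : ℝ → ℝ) (s : Set ℝ) : Prop :=
  ∀ t ∈ s,
    HasDerivAt a0 (4 * lam t / mu t * (ap t * am t - a0 t)) t ∧
    HasDerivAt ap (3 * (v3 t + v0 t) / (2 * lam t * mu t) * (a0 t * am t - ap t)
      - 2 * ap t * phi t) t ∧
    HasDerivAt am (3 * (v3 t - v0 t) / (2 * lam t * mu t) * (a0 t * ap t - am t)
      + 2 * am t * phi t) t ∧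
    HasDerivAt phi (3 / mu t ^ 2 * (((ap t ^ 2 + am t ^ 2) / 2 - 1) * v0 t
      - (ap t ^ 2 - am t ^ 2) / 2 * v3 t)) t

private lemma pos_of_pos_mul {a b : ℝ} (ha : 0 < a) (h : 0 < a * b) : 0 < b := by
  nlinarith

private lemma neg_of_pos_mul {a b : ℝ} (ha : 0 < a) (h : a * b < 0) : b < 0 := by
  nlinarith

private lemma mono_aux {f f' : ℝ → ℝ} {a b : ℝ}
    (hd : ∀ t ∈ Icc a b, HasDerivAt f (f' t) t)
    (h0 : ∀ t ∈ Ioo a b, 0 ≤ f' t) : MonotoneOn f (Icc a b) := by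
  apply monotoneOn_of_deriv_nonneg (convex_Icc a b)
    (fun t ht => (hd t ht).continuousAt.continuousWithinAt)
  · rw [interior_Icc]
    exact fun t ht => ((hd t (Ioo_subset_Icc_self ht)).differentiableAt).differentiableWithinAt
  · rw [interior_Icc]
    intro t ht
    rw [(hd t (Ioo_subset_Icc_self ht)).deriv]
    exact h0 t ht

private lemma gron_pos {f f' : ℝ → ℝ} {a b K : ℝ} (hab : a ≤ b)
    (hd : ∀ t ∈ Icc a b, HasDerivAt f (f' t) t)
    (hge : ∀ t ∈ Ioo a b, 0 ≤ f' t + K * f t)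
    (hfa : 0 < f a) : 0 < f b := by
  have hg : ∀ t ∈ Icc a b, HasDerivAt (fun s => f s * Real.exp (K * s))
      ((f' t + K * f t) * Real.exp (K * t)) t := by
    intro t ht
    have he : HasDerivAt (fun s : ℝ => Real.exp (K * s)) (Real.exp (K * t) * K) t := by
      simpa using ((hasDerivAt_id t).const_mul K).exp
    have h2 := (hd t ht).mul he
    exact h2.congr_deriv (by ring)
  have hmono : MonotoneOn (fun s => f s * Real.exp (K * s)) (Icc a b) :=
    mono_aux hg (fun t ht => mul_nonneg (hge t ht) (Real.exp_pos _).le)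
  have h1 := hmono (left_mem_Icc.2 hab) (right_mem_Icc.2 hab) hab
  have h2 : 0 < f a * Real.exp (K * a) := mul_pos hfa (Real.exp_pos _)
  simp only at h1
  nlinarith [Real.exp_pos (K * b)]

private lemma first_exit {a b : ℝ} {f : ℝ → ℝ}
    (hc : ContinuousOn f (Icc a b)) (hfa : 0 < f a)
    (step : ∀ t1 ∈ Icc a b, a < t1 → (∀ u ∈ Ico a t1, 0 < f u) → 0 < f t1) :
    ∀ t ∈ Icc a b, 0 < f t := by
  by_contra hcon
  push_neg at hcon
  obtain ⟨t0, ht0, hf0⟩ := hcon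
  set Bad : Set ℝ := {t ∈ Icc a b | f t ≤ 0} with hBad
  have hBadne : Bad.Nonempty := ⟨t0, ht0, hf0⟩
  have hBadclosed : IsClosed Bad := by
    have heq : Bad = Icc a b ∩ f ⁻¹' (Iic 0) := by
      ext x; simp [hBad]
    rw [heq]
    exact hc.preimage_isClosed_of_isClosed isClosed_Icc isClosed_Iic
  have hbdd : BddBelow Bad := ⟨a, fun x hx => hx.1.1⟩
  set t1 := sInf Bad with ht1def
  have ht1mem : t1 ∈ Bad := hBadclosed.csInf_mem hBadne hbdd
  have hat1 : a < t1 := by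
    rcases lt_or_eq_of_le (le_csInf hBadne fun x hx => hx.1.1) with h | h
    · exact h
    · exfalso; have h2 := ht1mem.2; rw [ht1def, ← h] at h2; linarith
  have hpos : ∀ u ∈ Ico a t1, 0 < f u := by
    intro u hu
    rcases eq_or_lt_of_le hu.1 with h | h
    · rwa [← h]
    · by_contra hle
      push_neg at hle
      exact (notMem_of_lt_csInf hu.2 hbdd) ⟨⟨hu.1, le_trans hu.2.le ht1mem.1.2⟩, hle⟩
  exact absurd (step t1 ht1mem.1 hat1 hpos) (not_lt.2 ht1mem.2)

private lemma stenzel_alg (lam mu v0 v3 a0 ap am phi : ℝ) (hl : lam ≠ 0) (hm : mu ≠ 0)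
    (hmu2 : mu ^ 2 = v3 ^ 2 - v0 ^ 2) :
    2 * lam * phi * ((v3 - v0) * ap ^ 2 + (v3 + v0) * am ^ 2) =
    (2 * ap ^ 1 * (3 * (v3 + v0) / (2 * lam * mu) * (a0 * am - ap) - 2 * ap * phi)
      + 2 * am ^ 1 * (3 * (v3 - v0) / (2 * lam * mu) * (a0 * ap - am) + 2 * am * phi)) / 2
        * (lam * v0)
      + ((ap ^ 2 + am ^ 2) / 2 - 1) * 0
      - ((2 * ap ^ 1 * (3 * (v3 + v0) / (2 * lam * mu) * (a0 * am - ap) - 2 * ap * phi)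
      - 2 * am ^ 1 * (3 * (v3 - v0) / (2 * lam * mu) * (a0 * ap - am) + 2 * am * phi)) / 2
        * (lam * v3) + (ap ^ 2 - am ^ 2) / 2 * (3 * mu)) := by
  field_simp
  linear_combination (3 * (ap ^ 2 - am ^ 2)) * hmu2

set_option maxHeartbeats 1000000 in
theorem forward_invariant_SpmInfty (lam mu v0 v3 a0 ap am phi : ℝ → ℝ)
    (hhypo : StenzelHypo lam mu v0 v3)
    (tstar T : ℝ) (hts : 0 < tstar) (htT : tstar ≤ T)
    (hsol : IsSolStenzelMonopole lam mu v0 v3 a0 ap am phi (Icc tstar T))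
    (h0 : 0 < a0 tstar) (hp : 0 < ap tstar) (hm : 0 < am tstar)
    (hphi : (0 < phi tstar ∧ 0 < deriv phi tstar) ∨
      (phi tstar < 0 ∧ deriv phi tstar < 0)) :
    (∀ t ∈ Icc tstar T, 0 < a0 t ∧ 0 < ap t ∧ 0 < am t) ∧
    ((0 < phi tstar ∧ 0 < deriv phi tstar) → ∀ t ∈ Icc tstar T, 0 < phi t) ∧
    ((phi tstar < 0 ∧ deriv phi tstar < 0) → ∀ t ∈ Icc tstar T, phi t < 0) := by
  obtain ⟨hlam, hmu, hv0, hv3, hineq, hevol⟩ := hhypo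
  have hsub : Icc tstar T ⊆ Ioi 0 := fun t ht => lt_of_lt_of_le hts ht.1
  have htsmem : tstar ∈ Icc tstar T := left_mem_Icc.2 htT
  have hca0 : ContinuousOn a0 (Icc tstar T) :=
    fun t ht => (hsol t ht).1.continuousAt.continuousWithinAt
  have hcap : ContinuousOn ap (Icc tstar T) :=
    fun t ht => (hsol t ht).2.1.continuousAt.continuousWithinAt
  have hcam : ContinuousOn am (Icc tstar T) :=
    fun t ht => (hsol t ht).2.2.1.continuousAt.continuousWithinAt
  have hcphi : ContinuousOn phi (Icc tstar T) :=
    fun t ht => (hsol t ht).2.2.2.continuousAt.continuousWithinAt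
  have hclam : ContinuousOn lam (Icc tstar T) := hlam.continuousOn.mono hsub
  have hcmu : ContinuousOn mu (Icc tstar T) := hmu.continuousOn.mono hsub
  have hcv0 : ContinuousOn v0 (Icc tstar T) := hv0.continuousOn.mono hsub
  have hcv3 : ContinuousOn v3 (Icc tstar T) := hv3.continuousOn.mono hsub
  have hlampos : ∀ t ∈ Icc tstar T, 0 < lam t := fun t ht => (hineq t (hsub ht)).1
  have hmupos : ∀ t ∈ Icc tstar T, 0 < mu t := fun t ht => (hineq t (hsub ht)).2.1
  -- Part 1: positivity of a0, ap, am
  set c : ℝ → ℝ := fun t => max (max (4 * lam t / mu t)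
      (3 * (v3 t + v0 t) / (2 * lam t * mu t) + 2 * phi t))
      (3 * (v3 t - v0 t) / (2 * lam t * mu t) - 2 * phi t) with hcdef
  have hden : ∀ t ∈ Icc tstar T, (2 : ℝ) * lam t * mu t ≠ 0 := fun t ht =>
    (mul_pos (mul_pos two_pos (hlampos t ht)) (hmupos t ht)).ne'
  have hccont : ContinuousOn c (Icc tstar T) := by
    apply ContinuousOn.sup
    · apply ContinuousOn.sup
      · exact (continuousOn_const.mul hclam).div hcmu (fun t ht => (hmupos t ht).ne')
      · exact (((continuousOn_const.mul (hcv3.add hcv0)).div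
          ((continuousOn_const.mul hclam).mul hcmu) hden).add (continuousOn_const.mul hcphi))
    · exact (((continuousOn_const.mul (hcv3.sub hcv0)).div
        ((continuousOn_const.mul hclam).mul hcmu) hden).sub (continuousOn_const.mul hcphi))
  obtain ⟨x, hx, hKmax⟩ := isCompact_Icc.exists_isMaxOn (nonempty_Icc.2 htT) hccont
  set K := c x with hKdef
  have hK : ∀ t ∈ Icc tstar T, c t ≤ K := fun t ht => hKmax ht
  have hpart1 : ∀ t ∈ Icc tstar T, 0 < a0 t ∧ 0 < ap t ∧ 0 < am t := by
    have hg : ∀ t ∈ Icc tstar T, 0 < min (min (a0 t) (ap t)) (am t) := by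
      apply first_exit ((hca0.inf hcap).inf hcam) (lt_min (lt_min h0 hp) hm)
      intro t1 ht1 hat1 hpos
      have hposa : ∀ u ∈ Ico tstar t1, 0 < a0 u ∧ 0 < ap u ∧ 0 < am u := by
        intro u hu
        have h := hpos u hu
        exact ⟨(lt_min_iff.1 (lt_min_iff.1 h).1).1, (lt_min_iff.1 (lt_min_iff.1 h).1).2,
          (lt_min_iff.1 h).2⟩
      have hIccsub : Icc tstar t1 ⊆ Icc tstar T := Icc_subset_Icc le_rfl ht1.2
      have key : ∀ t ∈ Ioo tstar t1,
          (0 < a0 t ∧ 0 < ap t ∧ 0 < am t) ∧ t ∈ Icc tstar T := fun t ht =>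
        ⟨hposa t (Ioo_subset_Ico_self ht), hIccsub (Ioo_subset_Icc_self ht)⟩
      have h1 : 0 < a0 t1 := by
        apply gron_pos (K := K) hat1.le (fun t ht => (hsol t (hIccsub ht)).1)
        · intro t ht
          obtain ⟨⟨hA, hP, hM⟩, ht'⟩ := key t ht
          have hcle : 4 * lam t / mu t ≤ K :=
            ((le_max_left _ _).trans (le_max_left _ _)).trans (hK t ht')
          have hcpos : 0 < 4 * lam t / mu t :=
            div_pos (by linarith [hlampos t ht']) (hmupos t ht')
          nlinarith [mul_pos hcpos (mul_pos hP hM), mul_nonneg (sub_nonneg.2 hcle) hA.le]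
        · exact h0
      have h2 : 0 < ap t1 := by
        apply gron_pos (K := K) hat1.le (fun t ht => (hsol t (hIccsub ht)).2.1)
        · intro t ht
          obtain ⟨⟨hA, hP, hM⟩, ht'⟩ := key t ht
          have hcle : 3 * (v3 t + v0 t) / (2 * lam t * mu t) + 2 * phi t ≤ K :=
            ((le_max_right _ _).trans (le_max_left _ _)).trans (hK t ht')
          obtain ⟨hl, hmup, _, hPp, _, _⟩ := hineq t (hsub ht')
          have he : 0 < 3 * (v3 t + v0 t) / (2 * lam t * mu t) :=
            div_pos (by linarith) (by nlinarith)
          nlinarith [mul_pos he (mul_pos hA hM),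
            mul_nonneg (show (0:ℝ) ≤ K - 3 * (v3 t + v0 t) / (2 * lam t * mu t) - 2 * phi t by
              linarith) hP.le]
        · exact hp
      have h3 : 0 < am t1 := by
        apply gron_pos (K := K) hat1.le (fun t ht => (hsol t (hIccsub ht)).2.2.1)
        · intro t ht
          obtain ⟨⟨hA, hP, hM⟩, ht'⟩ := key t ht
          have hcle : 3 * (v3 t - v0 t) / (2 * lam t * mu t) - 2 * phi t ≤ K :=
            (le_max_right _ _).trans (hK t ht')
          obtain ⟨hl, hmup, hMp, _, _, _⟩ := hineq t (hsub ht')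
          have he : 0 < 3 * (v3 t - v0 t) / (2 * lam t * mu t) :=
            div_pos (by linarith) (by nlinarith)
          nlinarith [mul_pos he (mul_pos hA hP),
            mul_nonneg (show (0:ℝ) ≤ K - 3 * (v3 t - v0 t) / (2 * lam t * mu t) + 2 * phi t by
              linarith) hM.le]
        · exact hm
      exact lt_min (lt_min h1 h2) h3
    intro t ht
    have h := hg t ht
    exact ⟨(lt_min_iff.1 (lt_min_iff.1 h).1).1, (lt_min_iff.1 (lt_min_iff.1 h).1).2,
      (lt_min_iff.1 h).2⟩
  -- Part 2: the key function F and its derivative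
  set F : ℝ → ℝ := fun t => ((ap t ^ 2 + am t ^ 2) / 2 - 1) * (lam t * v0 t)
      - (ap t ^ 2 - am t ^ 2) / 2 * (lam t * v3 t) with hFdef
  have hFderiv : ∀ t ∈ Icc tstar T, HasDerivAt F
      (2 * lam t * phi t * ((v3 t - v0 t) * ap t ^ 2 + (v3 t + v0 t) * am t ^ 2)) t := by
    intro t ht
    have ht0 : t ∈ Ioi (0:ℝ) := hsub ht
    obtain ⟨_, _, hlv3, hlv0⟩ := hevol t ht0
    obtain ⟨hda0, hdap, hdam, hdphi⟩ := hsol t ht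
    obtain ⟨hl, hm', hM, hP, hv0n, hmu2⟩ := hineq t ht0
    have h1 := (((hdap.pow 2).add (hdam.pow 2)).div_const 2).sub_const 1
    have h2 := ((hdap.pow 2).sub (hdam.pow 2)).div_const 2
    have hFd := (h1.mul hlv0).sub (h2.mul hlv3)
    exact hFd.congr_deriv (stenzel_alg (lam t) (mu t) (v0 t) (v3 t) (a0 t) (ap t) (am t) (phi t)
      hl.ne' hm'.ne' hmu2).symm
  have hFeq : ∀ t, F t = lam t * (((ap t ^ 2 + am t ^ 2) / 2 - 1) * v0 t
      - (ap t ^ 2 - am t ^ 2) / 2 * v3 t) := by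
    intro t; simp only [hFdef]; ring
  -- Case 1: phi positive
  have hcase1 : (0 < phi tstar ∧ 0 < deriv phi tstar) → ∀ t ∈ Icc tstar T, 0 < phi t := by
    rintro ⟨hphi1, hphi2⟩
    have hFstar : 0 < F tstar := by
      have hder := (hsol tstar htsmem).2.2.2
      rw [hder.deriv] at hphi2
      obtain ⟨hl, hm', _, _, _, _⟩ := hineq tstar (hsub htsmem)
      have h3 : 0 < 3 / mu tstar ^ 2 := by positivity
      have hB := pos_of_pos_mul h3 hphi2
      rw [hFeq]
      exact mul_pos hl hB
    apply first_exit hcphi hphi1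
    intro t1 ht1 hat1 hpos
    have hIccsub : Icc tstar t1 ⊆ Icc tstar T := Icc_subset_Icc le_rfl ht1.2
    have hFmono : MonotoneOn F (Icc tstar t1) := by
      apply mono_aux (fun t ht => hFderiv t (hIccsub ht))
      intro t ht
      have ht' := hIccsub (Ioo_subset_Icc_self ht)
      obtain ⟨hl, _, hM, hP, _, _⟩ := hineq t (hsub ht')
      have hphit : 0 < phi t := hpos t (Ioo_subset_Ico_self ht)
      have hq : 0 ≤ (v3 t - v0 t) * ap t ^ 2 + (v3 t + v0 t) * am t ^ 2 :=
        add_nonneg (mul_nonneg hM.le (sq_nonneg _)) (mul_nonneg hP.le (sq_nonneg _))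
      have : 0 ≤ 2 * lam t * phi t := by nlinarith
      exact mul_nonneg this hq
    have hphimono : StrictMonoOn phi (Icc tstar t1) := by
      apply strictMonoOn_of_deriv_pos (convex_Icc _ _) (hcphi.mono hIccsub)
      intro t ht
      rw [interior_Icc] at ht
      have ht' := hIccsub (Ioo_subset_Icc_self ht)
      have hder := (hsol t ht').2.2.2
      rw [hder.deriv]
      obtain ⟨hl, hm', _, _, _, _⟩ := hineq t (hsub ht')
      have hFt : 0 < F t :=
        lt_of_lt_of_le hFstar (hFmono (left_mem_Icc.2 hat1.le) (Ioo_subset_Icc_self ht) ht.1.le)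
      rw [hFeq t] at hFt
      have hB := pos_of_pos_mul hl hFt
      have h3 : 0 < 3 / mu t ^ 2 := by positivity
      exact mul_pos h3 hB
    have := hphimono (left_mem_Icc.2 hat1.le) (right_mem_Icc.2 hat1.le) hat1
    linarith
  -- Case 2: phi negative
  have hcase2 : (phi tstar < 0 ∧ deriv phi tstar < 0) → ∀ t ∈ Icc tstar T, phi t < 0 := by
    rintro ⟨hphi1, hphi2⟩
    have hFstar : F tstar < 0 := by
      have hder := (hsol tstar htsmem).2.2.2
      rw [hder.deriv] at hphi2
      obtain ⟨hl, hm', _, _, _, _⟩ := hineq tstar (hsub htsmem)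
      have h3 : 0 < 3 / mu tstar ^ 2 := by positivity
      have hB := neg_of_pos_mul h3 hphi2
      rw [hFeq]
      exact mul_neg_of_pos_of_neg hl hB
    have hneg : ∀ t ∈ Icc tstar T, 0 < -phi t := by
      apply first_exit hcphi.neg (by simpa using hphi1)
      intro t1 ht1 hat1 hpos
      have hIccsub : Icc tstar t1 ⊆ Icc tstar T := Icc_subset_Icc le_rfl ht1.2
      have hFmono : MonotoneOn (fun t => -F t) (Icc tstar t1) := by
        apply mono_aux (f' := fun t =>
          -(2 * lam t * phi t * ((v3 t - v0 t) * ap t ^ 2 + (v3 t + v0 t) * am t ^ 2)))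
          (fun t ht => (hFderiv t (hIccsub ht)).neg)
        intro t ht
        have ht' := hIccsub (Ioo_subset_Icc_self ht)
        obtain ⟨hl, _, hM, hP, _, _⟩ := hineq t (hsub ht')
        have hphit : phi t < 0 := by
          have := hpos t (Ioo_subset_Ico_self ht); simp only [Pi.neg_apply] at this; linarith
        have hq : 0 ≤ (v3 t - v0 t) * ap t ^ 2 + (v3 t + v0 t) * am t ^ 2 :=
          add_nonneg (mul_nonneg hM.le (sq_nonneg _)) (mul_nonneg hP.le (sq_nonneg _))
        have h2 : 2 * lam t * phi t ≤ 0 := by nlinarith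
        nlinarith [mul_nonneg (neg_nonneg.2 h2) hq]
      have hphimono : StrictAntiOn phi (Icc tstar t1) := by
        apply strictAntiOn_of_deriv_neg (convex_Icc _ _) (hcphi.mono hIccsub)
        intro t ht
        rw [interior_Icc] at ht
        have ht' := hIccsub (Ioo_subset_Icc_self ht)
        have hder := (hsol t ht').2.2.2
        rw [hder.deriv]
        obtain ⟨hl, hm', _, _, _, _⟩ := hineq t (hsub ht')
        have hFt : F t < 0 := by
          have := hFmono (left_mem_Icc.2 hat1.le) (Ioo_subset_Icc_self ht) ht.1.le
          simp only at this
          linarith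
        rw [hFeq t] at hFt
        have hB := neg_of_pos_mul hl hFt
        have h3 : 0 < 3 / mu t ^ 2 := by positivity
        exact mul_neg_of_pos_of_neg h3 hB
      have := hphimono (left_mem_Icc.2 hat1.le) (right_mem_Icc.2 hat1.le) hat1
      show 0 < -phi t1
      linarith
    intro t ht
    have := hneg t ht
    linarith
  exact ⟨hpart1, hcase1, hcase2⟩
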